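/- Fix ε > 0 and let X be a Gaussian random vector in ℝ³ with mean 0 and diagonal covariance matrix diag(1+ε, 1, 1). Then every unit vector u ∈ S² whose first coordinate is zero is a direction of axial symmetry of X (i.e. X =_d R_u X), yet X is not spherically symmetric. Hence, in dimension 3, a random vector satisfying the Carleman condition can have infinitely many symmetry axes without being spherically symmetric. -/

import Mathlib

/-!
The law of `X` has characteristic function `t ↦ exp (-(ε t₀² + ‖t‖²) / 2)`. Since characteristic
functions determine laws and `charFun (Q_* μ) t = charFun μ (Q⁻¹ t)`, a linear isometry `Q`
preserves the law exactly when `Q⁻¹` preserves `t₀²`. The reflection `R_u` with `u₀ = 0` negates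
`t₀`, while the isometry swapping the first two coordinates sends `e₁` to `e₀`.
-/

open MeasureTheory ProbabilityTheory
open scoped RealInnerProductSpace

/-- The reflection `R_u x = 2 ⟪u, x⟫ u - x` across the line spanned by the unit vector `u`. -/
noncomputable def reflMap {d : ℕ} (u : EuclideanSpace ℝ (Fin d)) (x : EuclideanSpace ℝ (Fin d)) :
    EuclideanSpace ℝ (Fin d) :=
  (2 * ⟪u, x⟫) • u - x

open Complex WithLp

section

variable {E F : Type*} [NormedAddCommGroup E] [InnerProductSpace ℝ E] [MeasurableSpace E]
  [BorelSpace E] [NormedAddCommGroup F] [InnerProductSpace ℝ F] [MeasurableSpace F] [BorelSpace F]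

lemma charFun_map_linearIsometryEquiv (μ : Measure E) (Q : E ≃ₗᵢ[ℝ] F) (t : F) :
    charFun (μ.map Q) t = charFun μ (Q.symm t) := by
  rw [charFun_apply, charFun_apply, integral_map (by fun_prop) (by fun_prop)]
  simp_rw [LinearIsometryEquiv.inner_map_eq_flip]

lemma map_linearIsometryEquiv_eq_self_iff [CompleteSpace E] [SecondCountableTopology E]
    (μ : Measure E) [IsFiniteMeasure μ] (Q : E ≃ₗᵢ[ℝ] E) :
    μ.map Q = μ ↔ ∀ t, charFun μ (Q.symm t) = charFun μ t := by
  refine ⟨fun h t => ?_, fun h => Measure.ext_of_charFun (funext fun t => ?_)⟩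
  · rw [← charFun_map_linearIsometryEquiv, h]
  · rw [charFun_map_linearIsometryEquiv, h]

end

lemma charFun_map_toLp_pi_gaussianReal {ι : Type*} [Fintype ι] (v : ι → NNReal)
    (t : EuclideanSpace ℝ ι) :
    charFun ((Measure.pi fun i => gaussianReal 0 (v i)).map (toLp 2)) t
      = exp (-(∑ i, (v i : ℝ) * t i ^ 2) / 2) := by
  simp_rw [charFun_pi, charFun_gaussianReal, ← exp_sum]
  push_cast
  congr 1
  simp [Finset.sum_div, neg_div, mul_comm]

lemma sum_ite_one_add_mul_sq {ι : Type*} [Fintype ι] [DecidableEq ι] (i₀ : ι) (a : ℝ)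
    (t : EuclideanSpace ℝ ι) :
    ∑ i, (if i = i₀ then 1 + a else 1) * t i ^ 2 = a * t i₀ ^ 2 + ‖t‖ ^ 2 := by
  calc ∑ i, (if i = i₀ then 1 + a else 1) * t i ^ 2
      = ∑ i, (t i ^ 2 + if i = i₀ then a * t i ^ 2 else 0) := by
        congr! 1 with i; split_ifs <;> ring
    _ = a * t i₀ ^ 2 + ‖t‖ ^ 2 := by
        rw [Finset.sum_add_distrib, Finset.sum_ite_eq', EuclideanSpace.real_norm_sq_eq]
        simp [add_comm]

section

variable {ι : Type*} [Fintype ι] [DecidableEq ι]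

noncomputable def elongatedGaussian (i₀ : ι) (ε : ℝ) : Measure (EuclideanSpace ℝ ι) :=
  (Measure.pi fun i => gaussianReal 0 (if i = i₀ then (1 + ε).toNNReal else 1)).map (toLp 2)

instance isProbabilityMeasure_elongatedGaussian (i₀ : ι) (ε : ℝ) :
    IsProbabilityMeasure (elongatedGaussian i₀ ε) :=
  Measure.isProbabilityMeasure_map (by fun_prop)

lemma charFun_elongatedGaussian (i₀ : ι) {ε : ℝ} (hε : -1 ≤ ε) (t : EuclideanSpace ℝ ι) :
    charFun (elongatedGaussian i₀ ε) t = Real.exp (-(ε * t i₀ ^ 2 + ‖t‖ ^ 2) / 2) := by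
  have hv : ∀ i, (((if i = i₀ then (1 + ε).toNNReal else 1 : NNReal)) : ℝ)
      = if i = i₀ then 1 + ε else 1 := by
    intro i; split_ifs <;> simp [Real.coe_toNNReal _ (by linarith : (0:ℝ) ≤ 1 + ε)]
  rw [elongatedGaussian, charFun_map_toLp_pi_gaussianReal]
  simp_rw [hv, sum_ite_one_add_mul_sq]
  push_cast; rfl

lemma map_elongatedGaussian_eq_self_iff (i₀ : ι) {ε : ℝ} (hε : -1 ≤ ε) (hε0 : ε ≠ 0)
    (Q : EuclideanSpace ℝ ι ≃ₗᵢ[ℝ] EuclideanSpace ℝ ι) :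
    (elongatedGaussian i₀ ε).map Q = elongatedGaussian i₀ ε ↔ ∀ t, Q.symm t i₀ ^ 2 = t i₀ ^ 2 := by
  rw [map_linearIsometryEquiv_eq_self_iff]
  refine forall_congr' fun t => ?_
  simp_rw [charFun_elongatedGaussian i₀ hε, Complex.ofReal_inj, Real.exp_eq_exp, Q.symm.norm_map]
  rw [div_left_inj' two_ne_zero, neg_inj, add_left_inj, mul_right_inj' hε0]

end

lemma reflMap_eq_reflection {d : ℕ} {u : EuclideanSpace ℝ (Fin d)} (hu : ‖u‖ = 1) :
    reflMap u = (ℝ ∙ u).reflection := by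
  funext x
  simp [reflMap, Submodule.reflection_apply, Submodule.starProjection_singleton, hu, two_smul,
    two_mul, add_smul]

/-- the centered Gaussian distribution on `ℝ³` with diagonal covariance
`diag(1+ε, 1, 1)` is axially symmetric around every unit vector whose first coordinate
vanishes, yet it is not spherically symmetric. -/
theorem gaussian_counterexample_dim3 (ε : ℝ) (hε : 0 < ε)
    (P : Measure (EuclideanSpace ℝ (Fin 3)))
    (hP : P = Measure.map (⇑(EuclideanSpace.equiv (Fin 3) ℝ).symm)
      (Measure.pi fun i => gaussianReal 0 (if i = 0 then (1 + ε).toNNReal else 1))) :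
    (∀ u : EuclideanSpace ℝ (Fin 3), ‖u‖ = 1 → u 0 = 0 →
      Measure.map (reflMap u) P = P) ∧
    ¬ (∀ Q : EuclideanSpace ℝ (Fin 3) ≃ₗᵢ[ℝ] EuclideanSpace ℝ (Fin 3),
        Measure.map (fun x => Q x) P = P) := by
  obtain rfl : P = elongatedGaussian 0 ε := hP
  refine ⟨fun u hu hu0 => ?_, fun h => ?_⟩
  · rw [reflMap_eq_reflection hu, map_elongatedGaussian_eq_self_iff 0 (by linarith) hε.ne']
    intro t
    simp [Submodule.reflection_symm, ← reflMap_eq_reflection hu, reflMap, hu0]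
  · have h_sq := (map_elongatedGaussian_eq_self_iff 0 (by linarith) hε.ne'
      (LinearIsometryEquiv.piLpCongrLeft 2 ℝ ℝ (Equiv.swap 0 1))).1 (h _) (EuclideanSpace.single 1 1)
    simp at h_sq
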